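/- arXiv:math/0511575 — 4 statements merged into one kernel-verified Lean document; each statement's English description precedes it below -/
import Mathlib

section
/- The Minkowski T-geometry is degenerate at every point in the direction of every timelike vector: let η(u,v) = u₀v₀ − u₁v₁ − u₂v₂ − u₃v₃ be the Minkowski form on ℝ⁴, let Q₀, Q ∈ ℝ⁴ with u = Q − Q₀ timelike (η(u,u) > 0), let P₀ ∈ ℝ⁴ and a > 0. Then there exists exactly one point R ∈ ℝ⁴ satisfying η(u, R − P₀) = √(η(u,u)) · a and η(R − P₀, R − P₀) = a². -/
/-- The Minkowski form η(u,v) = u₀v₀ − u₁v₁ − u₂v₂ − u₃v₃ on ℝ⁴. -/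
def minkowskiForm (u v : Fin 4 → ℝ) : ℝ :=
  u 0 * v 0 - u 1 * v 1 - u 2 * v 2 - u 3 * v 3

/-!
Write `u = Q - Q₀` and `t = √η(u,u)`. If `d = R - P₀` solves both equations, then
`w = t • d - a • u` satisfies `η(u,w) = 0` and `η(w,w) = 0`. A null vector orthogonal to a timelike vector vanishes (the
orthogonal complement of a timelike vector is spacelike), so `d = (a / t) • u`, and this
`d` is indeed a solution.
-/

namespace minkowskiForm

theorem comm (u v : Fin 4 → ℝ) : minkowskiForm u v = minkowskiForm v u := by
  simp only [minkowskiForm]; ring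

theorem smul_left (c : ℝ) (u v : Fin 4 → ℝ) :
    minkowskiForm (c • u) v = c * minkowskiForm u v := by
  simp only [minkowskiForm, Pi.smul_apply, smul_eq_mul]; ring

theorem smul_right (c : ℝ) (u v : Fin 4 → ℝ) :
    minkowskiForm u (c • v) = c * minkowskiForm u v := by
  rw [comm, smul_left, comm]

theorem sub_left (u v w : Fin 4 → ℝ) :
    minkowskiForm (u - v) w = minkowskiForm u w - minkowskiForm v w := by
  simp only [minkowskiForm, Pi.sub_apply]; ring

theorem sub_right (u v w : Fin 4 → ℝ) :
    minkowskiForm u (v - w) = minkowskiForm u v - minkowskiForm u w := by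
  rw [comm, sub_left, comm, comm w]

theorem eq_zero_of_timelike_of_orthogonal_of_null {u w : Fin 4 → ℝ}
    (hu : 0 < minkowskiForm u u) (horth : minkowskiForm u w = 0)
    (hnull : minkowskiForm w w = 0) : w = 0 := by
  simp only [minkowskiForm] at horth hnull
  -- Lagrange's identity for the spatial parts, after substituting `horth` and `hnull`.
  have lagrange : minkowskiForm u u * w 0 ^ 2 =
      -((u 1 * w 2 - u 2 * w 1) ^ 2 + (u 1 * w 3 - u 3 * w 1) ^ 2 +
        (u 2 * w 3 - u 3 * w 2) ^ 2) := by
    simp only [minkowskiForm]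
    linear_combination (u 0 * w 0 + u 1 * w 1 + u 2 * w 2 + u 3 * w 3) * horth -
      (u 1 ^ 2 + u 2 ^ 2 + u 3 ^ 2) * hnull
  have hw₀ : w 0 = 0 := by
    by_contra hne
    have := mul_pos hu (by positivity : 0 < w 0 ^ 2)
    nlinarith [sq_nonneg (u 1 * w 2 - u 2 * w 1), sq_nonneg (u 1 * w 3 - u 3 * w 1),
      sq_nonneg (u 2 * w 3 - u 3 * w 2)]
  have hspatial : w 1 ^ 2 + w 2 ^ 2 + w 3 ^ 2 = 0 := by
    linear_combination -hnull + w 0 * hw₀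
  funext i
  fin_cases i <;> simp only [Fin.reduceFinMk, Fin.isValue, Pi.zero_apply] <;>
    nlinarith [sq_nonneg (w 1), sq_nonneg (w 2), sq_nonneg (w 3)]

theorem smul_timelike_solves {u : Fin 4 → ℝ} (hu : 0 < minkowskiForm u u) (a : ℝ) :
    minkowskiForm u ((a / √(minkowskiForm u u)) • u) = √(minkowskiForm u u) * a ∧
      minkowskiForm ((a / √(minkowskiForm u u)) • u) ((a / √(minkowskiForm u u)) • u) =
        a ^ 2 := by
  set t := √(minkowskiForm u u)
  have ht : t ≠ 0 := (Real.sqrt_pos.mpr hu).ne'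
  have hsq : t ^ 2 = minkowskiForm u u := Real.sq_sqrt hu.le
  rw [smul_right, smul_left, smul_right, ← hsq]
  constructor <;> field_simp

theorem eq_smul_of_solves {u d : Fin 4 → ℝ} {a : ℝ} (hu : 0 < minkowskiForm u u)
    (hpar : minkowskiForm u d = √(minkowskiForm u u) * a)
    (hlen : minkowskiForm d d = a ^ 2) :
    d = (a / √(minkowskiForm u u)) • u := by
  set t := √(minkowskiForm u u)
  have ht : t ≠ 0 := (Real.sqrt_pos.mpr hu).ne'
  have hsq : t ^ 2 = minkowskiForm u u := Real.sq_sqrt hu.le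
  have horth : minkowskiForm u (t • d - a • u) = 0 := by
    rw [sub_right, smul_right, smul_right, hpar]
    linear_combination a * hsq
  have hnull : minkowskiForm (t • d - a • u) (t • d - a • u) = 0 := by
    simp only [sub_left, sub_right, smul_left, smul_right, comm d u, hpar, hlen]
    linear_combination -a ^ 2 * hsq
  have hw := sub_eq_zero.mp (eq_zero_of_timelike_of_orthogonal_of_null hu horth hnull)
  rw [div_eq_inv_mul, mul_smul, ← hw, smul_smul, inv_mul_cancel₀ ht, one_smul]

end minkowskiForm

theorem minkowski_degenerate_timelike_general (Q₀ Q P₀ : Fin 4 → ℝ)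
    (htimelike : 0 < minkowskiForm (Q - Q₀) (Q - Q₀)) (a : ℝ) :
    ∃! R : Fin 4 → ℝ,
      minkowskiForm (Q - Q₀) (R - P₀) =
          Real.sqrt (minkowskiForm (Q - Q₀) (Q - Q₀)) * a ∧
        minkowskiForm (R - P₀) (R - P₀) = a ^ 2 := by
  refine ⟨P₀ + (a / √(minkowskiForm (Q - Q₀) (Q - Q₀))) • (Q - Q₀), ?_, ?_⟩
  · simpa only [add_sub_cancel_left] using minkowskiForm.smul_timelike_solves htimelike a
  · rintro R ⟨hpar, hlen⟩
    rw [← sub_eq_iff_eq_add']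
    exact minkowskiForm.eq_smul_of_solves htimelike hpar hlen

/-- The Minkowski T-geometry is degenerate at every point in the direction of every
timelike vector: the parallelism-and-fixed-length equations have exactly one solution. -/
theorem minkowski_degenerate_timelike (Q₀ Q P₀ : Fin 4 → ℝ)
    (htimelike : 0 < minkowskiForm (Q - Q₀) (Q - Q₀)) (a : ℝ) (ha : 0 < a) :
    ∃! R : Fin 4 → ℝ,
      minkowskiForm (Q - Q₀) (R - P₀) =
          Real.sqrt (minkowskiForm (Q - Q₀) (Q - Q₀)) * a ∧
        minkowskiForm (R - P₀) (R - P₀) = a ^ 2 :=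
  minkowski_degenerate_timelike_general Q₀ Q P₀ htimelike a
end

section
/- The Minkowski T-geometry is nondegenerate at every point in the direction of every spacelike vector: let η(u,v) = u₀v₀ − u₁v₁ − u₂v₂ − u₃v₃ on ℝ⁴, let u = Q − Q₀ be spacelike (η(u,u) < 0), let P₀ ∈ ℝ⁴ and b < 0. Then there exist two distinct points R₁ ≠ R₂ such that for i = 1, 2: η(u, R_i − P₀)² = η(u,u) · η(R_i − P₀, R_i − P₀) and η(R_i − P₀, R_i − P₀) = b, and moreover R₂ − P₀ is not a scalar multiple of R₁ − P₀ (so the collinearity equations have more than one solution). -/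
lemma mf_add_right (u v w : Fin 4 → ℝ) :
    minkowskiForm u (v + w) = minkowskiForm u v + minkowskiForm u w := by
  simp [minkowskiForm, Pi.add_apply]; ring

lemma mf_add_left (u v w : Fin 4 → ℝ) :
    minkowskiForm (v + w) u = minkowskiForm v u + minkowskiForm w u := by
  simp [minkowskiForm, Pi.add_apply]; ring

lemma mf_smul_right (u v : Fin 4 → ℝ) (c : ℝ) :
    minkowskiForm u (c • v) = c * minkowskiForm u v := by
  simp [minkowskiForm, Pi.smul_apply, smul_eq_mul]; ring

lemma mf_smul_left (u v : Fin 4 → ℝ) (c : ℝ) :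
    minkowskiForm (c • v) u = c * minkowskiForm v u := by
  simp [minkowskiForm, Pi.smul_apply, smul_eq_mul]; ring

lemma mf_symm (u v : Fin 4 → ℝ) : minkowskiForm u v = minkowskiForm v u := by
  simp [minkowskiForm]; ring

/-- For a spacelike vector `u`, there is a nonzero null vector orthogonal to `u`. -/
lemma exists_null_orth (u : Fin 4 → ℝ) (h : minkowskiForm u u < 0) :
    ∃ z : Fin 4 → ℝ, minkowskiForm u z = 0 ∧ minkowskiForm z z = 0 ∧ 0 < z 0 := by
  have hs : (u 0)^2 < (u 1)^2 + (u 2)^2 + (u 3)^2 := by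
    simp only [minkowskiForm] at h; nlinarith
  have hs2pos : (0:ℝ) < (u 1)^2 + (u 2)^2 + (u 3)^2 := by nlinarith [sq_nonneg (u 0)]
  by_cases hp : (u 1)^2 + (u 2)^2 = 0
  · have h1 : u 1 = 0 := by
      have : (u 1)^2 = 0 := by nlinarith [sq_nonneg (u 1), sq_nonneg (u 2)]
      exact pow_eq_zero_iff (by norm_num) |>.mp this
    have h2 : u 2 = 0 := by
      have : (u 2)^2 = 0 := by nlinarith [sq_nonneg (u 1), sq_nonneg (u 2)]
      exact pow_eq_zero_iff (by norm_num) |>.mp this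
    set X := ((u 1)^2 + (u 2)^2 + (u 3)^2) * ((u 1)^2 + (u 2)^2 + (u 3)^2 - (u 0)^2)
      with hX
    have hXnn : 0 ≤ X := by rw [hX]; apply mul_nonneg hs2pos.le; linarith
    have hf : Real.sqrt X * Real.sqrt X = X := Real.mul_self_sqrt hXnn
    refine ⟨![(u 1)^2 + (u 2)^2 + (u 3)^2, Real.sqrt X, 0, u 0 * u 3], ?_, ?_, ?_⟩
    · show u 0 * ((u 1)^2 + (u 2)^2 + (u 3)^2) - u 1 * Real.sqrt X - u 2 * 0
        - u 3 * (u 0 * u 3) = 0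
      rw [h1, h2]; ring
    · show ((u 1)^2 + (u 2)^2 + (u 3)^2) * ((u 1)^2 + (u 2)^2 + (u 3)^2)
        - Real.sqrt X * Real.sqrt X - 0 * 0 - (u 0 * u 3) * (u 0 * u 3) = 0
      rw [hf, hX, h1, h2]; ring
    · show (0:ℝ) < (u 1)^2 + (u 2)^2 + (u 3)^2
      exact hs2pos
  · have hppos : (0:ℝ) < (u 1)^2 + (u 2)^2 := lt_of_le_of_ne (by positivity) (Ne.symm hp)
    set r := Real.sqrt (((u 1)^2 + (u 2)^2 + (u 3)^2)
      * ((u 1)^2 + (u 2)^2 + (u 3)^2 - (u 0)^2) / ((u 1)^2 + (u 2)^2)) with hrdef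
    have hr2 : r^2 = ((u 1)^2 + (u 2)^2 + (u 3)^2)
        * ((u 1)^2 + (u 2)^2 + (u 3)^2 - (u 0)^2) / ((u 1)^2 + (u 2)^2) := by
      rw [hrdef]
      exact Real.sq_sqrt (by
        apply div_nonneg _ hppos.le
        apply mul_nonneg hs2pos.le; linarith)
    have hr2' : r^2 * ((u 1)^2 + (u 2)^2) = ((u 1)^2 + (u 2)^2 + (u 3)^2)
        * ((u 1)^2 + (u 2)^2 + (u 3)^2 - (u 0)^2) := by
      rw [hr2]; field_simp
    refine ⟨![(u 1)^2 + (u 2)^2 + (u 3)^2, u 0 * u 1 - r * u 2,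
        u 0 * u 2 + r * u 1, u 0 * u 3], ?_, ?_, ?_⟩
    · show u 0 * ((u 1)^2 + (u 2)^2 + (u 3)^2) - u 1 * (u 0 * u 1 - r * u 2)
        - u 2 * (u 0 * u 2 + r * u 1) - u 3 * (u 0 * u 3) = 0
      ring
    · show ((u 1)^2 + (u 2)^2 + (u 3)^2) * ((u 1)^2 + (u 2)^2 + (u 3)^2)
        - (u 0 * u 1 - r * u 2) * (u 0 * u 1 - r * u 2)
        - (u 0 * u 2 + r * u 1) * (u 0 * u 2 + r * u 1)
        - (u 0 * u 3) * (u 0 * u 3) = 0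
      nlinarith [hr2']
    · show (0:ℝ) < (u 1)^2 + (u 2)^2 + (u 3)^2
      exact hs2pos

/-- The Minkowski T-geometry is nondegenerate at every point in the direction of every
spacelike vector: the collinearity-and-fixed-length equations admit more than one
solution, and the solutions are not proportional to each other. -/
theorem minkowski_nondegenerate_spacelike (Q₀ Q P₀ : Fin 4 → ℝ)
    (hspacelike : minkowskiForm (Q - Q₀) (Q - Q₀) < 0) (b : ℝ) (hb : b < 0) :
    ∃ R₁ R₂ : Fin 4 → ℝ, R₁ ≠ R₂ ∧
      (minkowskiForm (Q - Q₀) (R₁ - P₀) ^ 2 =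
          minkowskiForm (Q - Q₀) (Q - Q₀) * minkowskiForm (R₁ - P₀) (R₁ - P₀) ∧
        minkowskiForm (R₁ - P₀) (R₁ - P₀) = b) ∧
      (minkowskiForm (Q - Q₀) (R₂ - P₀) ^ 2 =
          minkowskiForm (Q - Q₀) (Q - Q₀) * minkowskiForm (R₂ - P₀) (R₂ - P₀) ∧
        minkowskiForm (R₂ - P₀) (R₂ - P₀) = b) ∧
      ¬ ∃ c : ℝ, R₂ - P₀ = c • (R₁ - P₀) := by
  set u := Q - Q₀ with hu
  set η := minkowskiForm u u with hη
  have hηne : η ≠ 0 := ne_of_lt hspacelike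
  obtain ⟨z, hz1, hz2, hz0⟩ := exists_null_orth u hspacelike
  have hz1' : minkowskiForm z u = 0 := by rw [mf_symm]; exact hz1
  have hdivpos : 0 < b / η := div_pos_of_neg_of_neg hb hspacelike
  set t := Real.sqrt (b / η) with htdef
  have htpos : 0 < t := Real.sqrt_pos.mpr hdivpos
  have ht2 : t^2 = b / η := Real.sq_sqrt hdivpos.le
  have ht2' : t^2 * η = b := by rw [ht2]; field_simp
  refine ⟨P₀ + t • u, P₀ + t • u + z, ?_, ?_, ?_, ?_⟩
  · intro h
    have h0 := congrFun h 0
    simp only [Pi.add_apply] at h0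
    linarith
  · rw [add_sub_cancel_left, mf_smul_right, mf_smul_left, mf_smul_right]
    constructor
    · ring
    · linear_combination ht2'
  · have hR2 : P₀ + t • u + z - P₀ = t • u + z := by
      rw [add_assoc]; exact add_sub_cancel_left _ _
    rw [hR2]
    simp only [mf_add_right, mf_add_left, mf_smul_right, mf_smul_left, hz1, hz2, hz1']
    constructor
    · ring
    · linear_combination ht2'
  · rintro ⟨c, hc⟩
    rw [add_sub_cancel_left] at hc
    have hR2 : P₀ + t • u + z - P₀ = t • u + z := by
      rw [add_assoc]; exact add_sub_cancel_left _ _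
    rw [hR2] at hc
    have h1 := congrArg (minkowskiForm u) hc
    simp only [mf_add_right, mf_smul_right, hz1] at h1
    have hc1 : c = 1 := by
      have hne : t * minkowskiForm u u ≠ 0 := mul_ne_zero (ne_of_gt htpos) hηne
      have h2 : c * (t * minkowskiForm u u) = 1 * (t * minkowskiForm u u) := by
        linarith [h1]
      exact mul_right_cancel₀ hne h2
    rw [hc1, one_smul] at hc
    have h0 := congrFun hc 0
    simp only [Pi.add_apply] at h0
    linarith
end

section
/- Menger's theorem: let Ω be a set and σ: Ω × Ω → ℝ a world function (σ(P,P) = 0 for all P, and σ symmetric). The σ-space (Ω, σ) is isometrically embeddable in the n-dimensional proper Euclidean space — i.e., there exists f: Ω → EuclideanSpace ℝ (Fin n) with ½‖f(P) − f(Q)‖² = σ(P,Q) for all P, Q — if and only if every finite subset S ⊆ Ω with at most n+3 points is isometrically embeddable, i.e., admits f_S: S → EuclideanSpace ℝ (Fin n) with ½‖f_S(P) − f_S(Q)‖² = σ(P,Q) for all P, Q ∈ S. -/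
/-!
Fix a base point `P₀`. A map `f` with `f P₀ = 0` is an isometric embedding of `(Ω, σ)` exactly
when `⟪f R, f S⟫ = σ R P₀ + σ S P₀ - σ R S`, so it suffices to realize this kernel as a Gram
kernel in an `n`-dimensional space, knowing that every family of `n + 2` points can be realized.
Take a linearly independent realization `v` of a family `p` of maximal length `k ≤ n`. In any
realization of `p, R, S` the images of `R` and `S` lie in the span of the images of `p`, by
maximality; since those have the Gram matrix of `v`, the configuration can be moved into the span
of `v`. There the image of `R` is pinned down by its inner products with `v`, so these
images are independent of `S` and assemble into a global realization.
-/

open Finset Submodule Set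
open scoped RealInnerProductSpace

section GramMatrix

variable {E : Type*} [NormedAddCommGroup E] [InnerProductSpace ℝ E]
  {ι : Type*} [Fintype ι] {v w : ι → E}

theorem inner_sum_smul_sum_smul_of_inner_eq (hvw : ∀ i j, ⟪v i, v j⟫ = ⟪w i, w j⟫)
    (c d : ι → ℝ) :
    ⟪∑ i, c i • v i, ∑ j, d j • v j⟫ = ⟪∑ i, c i • w i, ∑ j, d j • w j⟫ := by
  simp only [sum_inner, inner_sum, real_inner_smul_left, real_inner_smul_right, hvw]

theorem LinearIndependent.of_inner_eq (hv : LinearIndependent ℝ v)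
    (hvw : ∀ i j, ⟪v i, v j⟫ = ⟪w i, w j⟫) : LinearIndependent ℝ w := by
  rw [Fintype.linearIndependent_iff] at hv ⊢
  intro c hc
  apply hv c
  rw [← inner_self_eq_zero (𝕜 := ℝ), inner_sum_smul_sum_smul_of_inner_eq hvw, hc,
    inner_zero_left]

theorem eq_of_mem_span_range_of_inner_eq {a c : E} (ha : a ∈ span ℝ (range v))
    (hc : c ∈ span ℝ (range v)) (h : ∀ j, ⟪a, v j⟫ = ⟪c, v j⟫) : a = c := by
  obtain ⟨e, he⟩ := (mem_span_range_iff_exists_fun ℝ).1 (sub_mem ha hc)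
  rw [← sub_eq_zero, ← inner_self_eq_zero (𝕜 := ℝ)]
  nth_rw 2 [← he]
  simp [inner_sum, real_inner_smul_right, inner_sub_left, h]

theorem exists_mem_span_range_inner_eq (hvw : ∀ i j, ⟪v i, v j⟫ = ⟪w i, w j⟫) {u z : E}
    (hu : u ∈ span ℝ (range w)) (hz : z ∈ span ℝ (range w)) :
    ∃ a ∈ span ℝ (range v), ∃ b ∈ span ℝ (range v), (∀ j, ⟪a, v j⟫ = ⟪u, w j⟫) ∧
      (∀ j, ⟪b, v j⟫ = ⟪z, w j⟫) ∧ ⟪a, b⟫ = ⟪u, z⟫ := by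
  obtain ⟨c, rfl⟩ := (mem_span_range_iff_exists_fun ℝ).1 hu
  obtain ⟨d, rfl⟩ := (mem_span_range_iff_exists_fun ℝ).1 hz
  refine ⟨_, (mem_span_range_iff_exists_fun ℝ).2 ⟨c, rfl⟩,
    _, (mem_span_range_iff_exists_fun ℝ).2 ⟨d, rfl⟩, fun j => ?_, fun j => ?_,
    inner_sum_smul_sum_smul_of_inner_eq hvw c d⟩ <;>
  simp only [sum_inner, real_inner_smul_left, hvw]

end GramMatrix

section GramRealization

variable {E : Type*} [NormedAddCommGroup E] [InnerProductSpace ℝ E] {Ω : Type*}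

abbrev RealizesGram {ι : Type*} (g : Ω → Ω → ℝ) (p : ι → Ω) (x : ι → E) : Prop :=
  ∀ i j, ⟪x i, x j⟫ = g (p i) (p j)

theorem RealizesGram.comp {ι κ : Type*} {g : Ω → Ω → ℝ} {p : ι → Ω} {x : ι → E}
    (h : RealizesGram g p x) (e : κ → ι) : RealizesGram g (p ∘ e) (x ∘ e) :=
  fun i j => h (e i) (e j)

theorem exists_maximal_linearIndependent_realizesGram [FiniteDimensional ℝ E]
    (g : Ω → Ω → ℝ) :
    ∃ (k : ℕ) (p : Fin k → Ω) (v : Fin k → E), LinearIndependent ℝ v ∧ RealizesGram g p v ∧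
      ∀ (l : ℕ) (q : Fin l → Ω) (y : Fin l → E) (e : Fin k → Fin l), q ∘ e = p →
        RealizesGram g q y → ∀ t, y t ∈ span ℝ (range (y ∘ e)) := by
  classical
  let HasIndepRealization k :=
    ∃ (p : Fin k → Ω) (v : Fin k → E), LinearIndependent ℝ v ∧ RealizesGram g p v
  have hbound : ∀ k, HasIndepRealization k → k ≤ Module.finrank ℝ E := fun k ⟨_, _, hv, _⟩ => by
    simpa using hv.fintype_card_le_finrank
  set k := Nat.findGreatest HasIndepRealization (Module.finrank ℝ E)
  obtain ⟨p, v, hv, hpv⟩ : HasIndepRealization k :=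
    Nat.findGreatest_spec (Nat.zero_le _)
      ⟨Fin.elim0, Fin.elim0, linearIndependent_empty_type, fun i => i.elim0⟩
  refine ⟨_, p, v, hv, hpv, fun l q y e hqe hqy t => ?_⟩
  by_contra ht
  have hye : LinearIndependent ℝ (y ∘ e) :=
    hv.of_inner_eq fun i j => by rw [hpv, ← hqe]; exact (hqy.comp e i j).symm
  have hlonger : HasIndepRealization (k + 1) := by
    refine ⟨Fin.snoc p (q t), y ∘ Fin.snoc e t, ?_, ?_⟩
    · rw [Fin.comp_snoc]
      exact linearIndependent_finSnoc.2 ⟨hye, ht⟩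
    · simpa [Fin.comp_snoc, hqe] using hqy.comp (Fin.snoc e t)
  exact Nat.findGreatest_is_greatest (Nat.lt_succ_self _) (hbound _ hlonger) hlonger

theorem exists_realizesGram_of_forall_fin [FiniteDimensional ℝ E] (g : Ω → Ω → ℝ)
    (h : ∀ (k : ℕ) (p : Fin k → Ω), k ≤ Module.finrank ℝ E + 2 →
      ∃ x : Fin k → E, RealizesGram g p x) :
    ∃ f : Ω → E, ∀ R S, ⟪f R, f S⟫ = g R S := by
  obtain ⟨k, p, v, hv, hpv, hmax⟩ := exists_maximal_linearIndependent_realizesGram (E := E) g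
  have key : ∀ R S, ∃ a ∈ span ℝ (range v), ∃ b ∈ span ℝ (range v),
      (∀ j, ⟪a, v j⟫ = g R (p j)) ∧ (∀ j, ⟪b, v j⟫ = g S (p j)) ∧ ⟪a, b⟫ = g R S := by
    intro R S
    let q : Fin (k + 2) → Ω := Fin.snoc (Fin.snoc p R) S
    have hk : k ≤ Module.finrank ℝ E := by simpa using hv.fintype_card_le_finrank
    obtain ⟨y, hy⟩ := h (k + 2) q (by omega)
    have hqp : q ∘ (Fin.castSucc ∘ Fin.castSucc) = p := by ext; simp [q]
    have hvy : ∀ i j, ⟪v i, v j⟫ = ⟪y i.castSucc.castSucc, y j.castSucc.castSucc⟫ := by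
      intro i j
      rw [hpv, hy]
      simp [q]
    simpa [q, hy] using exists_mem_span_range_inner_eq hvy
      (hmax _ q y _ hqp hy (Fin.last k).castSucc) (hmax _ q y _ hqp hy (Fin.last (k + 1)))
  have hcoord : ∀ R, ∃ a ∈ span ℝ (range v), ∀ j, ⟪a, v j⟫ = g R (p j) := fun R =>
    let ⟨a, ha, _, _, hav, _⟩ := key R R
    ⟨a, ha, hav⟩
  choose F hF hFv using hcoord
  refine ⟨F, fun R S => ?_⟩
  obtain ⟨a, ha, b, hb, hav, hbv, hab⟩ := key R S
  rwa [eq_of_mem_span_range_of_inner_eq (hF R) ha fun j => (hFv R j).trans (hav j).symm,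
    eq_of_mem_span_range_of_inner_eq (hF S) hb fun j => (hFv S j).trans (hbv j).symm]

theorem exists_realizesGram_of_forall_finset (σ : Ω → Ω → ℝ) {m : ℕ}
    (H : ∀ S : Finset Ω, S.card ≤ m + 1 →
      ∃ f : S → E, ∀ P Q : S, ‖f P - f Q‖ ^ 2 / 2 = σ P Q)
    (P₀ : Ω) {k : ℕ} (p : Fin k → Ω) (hk : k ≤ m) :
    ∃ x : Fin k → E, RealizesGram (fun R S => σ R P₀ + σ S P₀ - σ R S) p x := by
  classical
  have hp : ∀ i, p i ∈ insert P₀ (Finset.univ.image p) := fun i =>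
    mem_insert_of_mem (mem_image_of_mem p (mem_univ i))
  have hcard : (insert P₀ (Finset.univ.image p)).card ≤ m + 1 := by
    grw [card_insert_le, card_image_le]; simpa
  obtain ⟨f, hf⟩ := H _ hcard
  let O : ↥(insert P₀ (Finset.univ.image p)) := ⟨P₀, mem_insert_self _ _⟩
  refine ⟨fun i => f ⟨p i, hp i⟩ - f O, fun i j => ?_⟩
  have hi := hf ⟨p i, hp i⟩ O
  have hj := hf ⟨p j, hp j⟩ O
  have hij := hf ⟨p i, hp i⟩ ⟨p j, hp j⟩
  rw [← sub_sub_sub_cancel_right _ _ (f O)] at hij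
  linarith [norm_sub_sq_real (f ⟨p i, hp i⟩ - f O) (f ⟨p j, hp j⟩ - f O)]

end GramRealization

theorem menger_embedding_theorem_general (n : ℕ) (Ω : Type*) (σ : Ω → Ω → ℝ)
    (hzero : ∀ P : Ω, σ P P = 0) :
    (∃ f : Ω → EuclideanSpace ℝ (Fin n),
        ∀ P Q : Ω, ‖f P - f Q‖ ^ 2 / 2 = σ P Q) ↔
      ∀ S : Finset Ω, S.card ≤ n + 3 →
        ∃ f : S → EuclideanSpace ℝ (Fin n),
          ∀ P Q : S, ‖f P - f Q‖ ^ 2 / 2 = σ P Q := by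
  constructor
  · rintro ⟨f, hf⟩ S -
    exact ⟨fun P => f P, fun P Q => hf P Q⟩
  · intro H
    rcases isEmpty_or_nonempty Ω with hΩ | ⟨⟨P₀⟩⟩
    · exact ⟨isEmptyElim, isEmptyElim⟩
    obtain ⟨f, hf⟩ := exists_realizesGram_of_forall_fin (E := EuclideanSpace ℝ (Fin n)) _
      fun k p hk => exists_realizesGram_of_forall_finset σ H P₀ p (by simpa using hk)
    refine ⟨f, fun R S => ?_⟩
    rw [norm_sub_sq_real, ← real_inner_self_eq_norm_sq, ← real_inner_self_eq_norm_sq, hf, hf, hf,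
      hzero, hzero]
    ring

/-- Menger's theorem: the σ-space (Ω, σ) is isometrically embeddable in the
n-dimensional proper Euclidean space if and only if every set of at most n + 3 points
of Ω is isometrically embeddable in it. -/
theorem menger_embedding_theorem (n : ℕ) (Ω : Type*) (σ : Ω → Ω → ℝ)
    (hzero : ∀ P : Ω, σ P P = 0) (hsymm : ∀ P Q : Ω, σ P Q = σ Q P) :
    (∃ f : Ω → EuclideanSpace ℝ (Fin n),
        ∀ P Q : Ω, ‖f P - f Q‖ ^ 2 / 2 = σ P Q) ↔
      ∀ S : Finset Ω, S.card ≤ n + 3 →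
        ∃ f : S → EuclideanSpace ℝ (Fin n),
          ∀ P Q : S, ‖f P - f Q‖ ^ 2 / 2 = σ P Q :=
  menger_embedding_theorem_general n Ω σ hzero
end

section
/- σ-immanence theorem (converse direction): let Ω be a set and σ: Ω × Ω → ℝ satisfy σ(P,P) = 0 and σ(P,Q) = σ(Q,P) for all P, Q. Define the scalar product (P₀P₁.Q₀Q₁) := σ(P₀,Q₁) + σ(P₁,Q₀) − σ(P₀,Q₀) − σ(P₁,Q₁). Suppose there exist points P₀, P₁, …, P_n ∈ Ω such that: (II) the n×n Gram matrix G with G_{il} = (P₀P_i.P₀P_l) is nonsingular, and for every k > n and all points Q₀,…,Q_k ∈ Ω the corresponding (k×k) Gram determinant vanishes; (III) for all P, Q ∈ Ω, σ(P,Q) = ½ Σ_{i,k=1}^{n} (G⁻¹)_{ik}(x_i(P) − x_i(Q))(x_k(P) − x_k(Q)), where x_i(P) = (P₀P_i.P₀P); (IV) G is positive definite; (V) the map P ↦ (x_1(P),…,x_n(P)) is a bijection from Ω onto ℝⁿ. Then (Ω, σ) is the n-dimensional proper Euclidean space: there exists a bijection f: Ω → EuclideanSpace ℝ (Fin n) such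 that σ(P,Q) = ½‖f(P) − f(Q)‖² for all P, Q ∈ Ω. -/
/-!
By condition III, `2σ(P, Q)` is the quadratic form of `G⁻¹` evaluated on the difference of the
covariant coordinates of `P` and `Q`. Since `G` is positive definite, so is `G⁻¹`, which therefore
factors as `BᵀB` with `B` invertible; then `P ↦ B x(P)` carries `2σ` to the squared Euclidean
distance, and it is a bijection onto `ℝⁿ` because `x` is one (condition V).
-/

open Matrix

theorem Matrix.sum_sum_mul_mul_eq_dotProduct_mulVec {ι R : Type*} [Fintype ι] [CommSemiring R]
    (M : Matrix ι ι R) (v : ι → R) :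
    ∑ i, ∑ k, M i k * v i * v k = v ⬝ᵥ M *ᵥ v := by
  simp only [dotProduct, mulVec, Finset.mul_sum]
  exact Finset.sum_congr rfl fun i _ => Finset.sum_congr rfl fun k _ => by ring

namespace Matrix.PosDef

variable {ι : Type*} [Fintype ι] [DecidableEq ι] {H : Matrix ι ι ℝ}

theorem exists_isUnit_det_and_eq_transpose_mul_self (hH : H.PosDef) :
    ∃ B : Matrix ι ι ℝ, IsUnit B.det ∧ H = Bᵀ * B := by
  open scoped MatrixOrder in
  obtain ⟨B, rfl⟩ := CStarAlgebra.nonneg_iff_eq_star_mul_self.mp hH.posSemidef.nonneg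
  rw [star_eq_conjTranspose, conjTranspose_eq_transpose_of_trivial] at hH ⊢
  refine ⟨B, ?_, rfl⟩
  have hdet := hH.det_pos
  rw [det_mul, det_transpose] at hdet
  exact isUnit_iff_ne_zero.mpr fun h => by simp [h] at hdet

theorem exists_linearEquiv_euclideanSpace_norm_sq (hH : H.PosDef) :
    ∃ L : (ι → ℝ) ≃ₗ[ℝ] EuclideanSpace ℝ ι, ∀ v, ‖L v‖ ^ 2 = v ⬝ᵥ H *ᵥ v := by
  obtain ⟨B, hB, rfl⟩ := hH.exists_isUnit_det_and_eq_transpose_mul_self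
  refine ⟨B.toLinearEquiv' (B.invertibleOfIsUnitDet hB) ≪≫ₗ (WithLp.linearEquiv 2 ℝ _).symm,
    fun v => ?_⟩
  calc _ = ∑ i, (B *ᵥ v) i ^ 2 := EuclideanSpace.real_norm_sq_eq _
    _ = (B *ᵥ v) ⬝ᵥ (B *ᵥ v) := by simp only [dotProduct, sq]
    _ = v ⬝ᵥ (Bᵀ * B) *ᵥ v := by
        rw [← mulVec_mulVec, dotProduct_mulVec v, vecMul_transpose]

end Matrix.PosDef

open Matrix in
theorem sigma_immanence_converse_general (n : ℕ) (Ω : Type*) (σ : Ω → Ω → ℝ)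
    -- the distinguished points P₀, P₁, …, P_n and their Gram matrix G
    (G : Matrix (Fin n) (Fin n) ℝ)
    -- covariant coordinates x_i(P) = (P₀P_i.P₀P)
    (x : Ω → Fin n → ℝ)
    -- condition III: linear structure
    (hIII : ∀ Pa Qa : Ω, σ Pa Qa =
      (1 / 2) * ∑ i : Fin n, ∑ k : Fin n,
        G⁻¹ i k * (x Pa i - x Qa i) * (x Pa k - x Qa k))
    -- condition IV: G positive definite
    (hIV : G.PosDef)
    -- condition V: the coordinate map is a bijection onto ℝⁿ
    (hV : Function.Bijective x) :
    ∃ f : Ω → EuclideanSpace ℝ (Fin n),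
      Function.Bijective f ∧ ∀ Pa Qa : Ω, σ Pa Qa = ‖f Pa - f Qa‖ ^ 2 / 2 := by
  obtain ⟨L, hL⟩ := hIV.inv.exists_linearEquiv_euclideanSpace_norm_sq
  refine ⟨L ∘ x, L.bijective.comp hV, fun Pa Qa => ?_⟩
  have hdiff := G⁻¹.sum_sum_mul_mul_eq_dotProduct_mulVec (x Pa - x Qa)
  simp only [Pi.sub_apply] at hdiff
  rw [hIII, hdiff, Function.comp_apply, Function.comp_apply, ← map_sub, hL]
  ring

/-- σ-immanence theorem (converse direction): a σ-space whose world function satisfies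
conditions II–V is the n-dimensional proper Euclidean space. -/
theorem sigma_immanence_converse (n : ℕ) (Ω : Type*) (σ : Ω → Ω → ℝ)
    (hzero : ∀ P : Ω, σ P P = 0) (hsymm : ∀ P Q : Ω, σ P Q = σ Q P)
    -- the σ-immanent scalar product (P₀P₁.Q₀Q₁)
    (sp : Ω → Ω → Ω → Ω → ℝ)
    (hsp : ∀ P₀ P₁ Q₀ Q₁ : Ω,
      sp P₀ P₁ Q₀ Q₁ = σ P₀ Q₁ + σ P₁ Q₀ - σ P₀ Q₀ - σ P₁ Q₁)
    -- the distinguished points P₀, P₁, …, P_n and their Gram matrix G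
    (P₀ : Ω) (P : Fin n → Ω) (G : Matrix (Fin n) (Fin n) ℝ)
    (hG : G = Matrix.of fun i l : Fin n => sp P₀ (P i) P₀ (P l))
    -- covariant coordinates x_i(P) = (P₀P_i.P₀P)
    (x : Ω → Fin n → ℝ) (hx : ∀ (R : Ω) (i : Fin n), x R i = sp P₀ (P i) P₀ R)
    -- condition II: G nonsingular, and all larger Gram determinants vanish
    (hII₁ : IsUnit G.det)
    (hII₂ : ∀ k : ℕ, k > n → ∀ Q₀ : Ω, ∀ Q : Fin k → Ω,
      (Matrix.of fun i l : Fin k => sp Q₀ (Q i) Q₀ (Q l)).det = 0)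
    -- condition III: linear structure
    (hIII : ∀ Pa Qa : Ω, σ Pa Qa =
      (1 / 2) * ∑ i : Fin n, ∑ k : Fin n,
        G⁻¹ i k * (x Pa i - x Qa i) * (x Pa k - x Qa k))
    -- condition IV: G positive definite
    (hIV : G.PosDef)
    -- condition V: the coordinate map is a bijection onto ℝⁿ
    (hV : Function.Bijective x) :
    ∃ f : Ω → EuclideanSpace ℝ (Fin n),
      Function.Bijective f ∧ ∀ Pa Qa : Ω, σ Pa Qa = ‖f Pa - f Qa‖ ^ 2 / 2 :=
  sigma_immanence_converse_general n Ω σ G x hIII hIV hV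
end
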